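/- Let T = Σ_{i=1}^r x^{(i)} be a two-orthogonal decomposition in ℝ^{n_1} ⊗ ⋯ ⊗ ℝ^{n_d}. Then for each i there exist unit vectors u_k ∈ ℝ^{n_k} (⟨u_k,u_k⟩ = 1 for all k) and a real number λ with |λ| = ‖x^{(i)}‖ such that x^{(i)} = λ u_1 ⊗ ⋯ ⊗ u_d and u_1 ⊗ ⋯ ⊗ u_d is a singular vector tuple of T with singular value λ. -/

import Mathlib

/-!
Rescale each factor of `x⁽ⁱ⁾` to a unit vector `u_k`, so that `x⁽ⁱ⁾ = λ u₁ ⊗ ⋯ ⊗ u_d`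
with `λ = ∏ ‖x⁽ⁱ⁾_k‖`. Contracting a rank-one tensor `v₁ ⊗ ⋯ ⊗ v_d` against all `u_l`
with `l ≠ k` gives `v_k ∏_{l ≠ k} ⟨v_l, u_l⟩`. For `j ≠ i` the summand `x⁽ʲ⁾` is
orthogonal to `x⁽ⁱ⁾` in two factors, and at least one of them survives the omission of
the `k`-th factor, so its contraction vanishes; the contraction of `x⁽ⁱ⁾` is `λ u_k`.
-/

/-- Frobenius/Euclidean inner product of real arrays indexed by a finite type. -/
def fdot {ι : Type*} [Fintype ι] (u v : ι → ℝ) : ℝ := ∑ a, u a * v a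

/-- The rank-one tensor `v₁ ⊗ ⋯ ⊗ v_d`, as an array. -/
def tensProd {d : ℕ} {n : Fin d → ℕ} (v : (k : Fin d) → Fin (n k) → ℝ) :
    ((k : Fin d) → Fin (n k)) → ℝ :=
  fun i => ∏ k, v k (i k)

/-- The contraction of `T` against the vectors `x_l`, `l ≠ k`, in all factors but
the `k`-th: its `m`-th entry is `Σ_{i : i_k = m} T(i) ∏_{l ≠ k} x_l(i_l)`. -/
def contr {d : ℕ} {n : Fin d → ℕ} (T : ((k : Fin d) → Fin (n k)) → ℝ)
    (x : (k : Fin d) → Fin (n k) → ℝ) (k : Fin d) (m : Fin (n k)) : ℝ :=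
  ∑ i ∈ Finset.univ.filter (fun i : (k' : Fin d) → Fin (n k') => i k = m),
    T i * ∏ l ∈ Finset.univ.erase k, x l (i l)

open Finset Matrix

section Fdot

variable {ι : Type*} [Fintype ι]

lemma fdot_eq_dotProduct (u v : ι → ℝ) : fdot u v = u ⬝ᵥ v := rfl

lemma fdot_smul_left (a : ℝ) (u v : ι → ℝ) : fdot (a • u) v = a * fdot u v := by
  simp only [fdot_eq_dotProduct, smul_dotProduct, smul_eq_mul]

lemma fdot_smul_right (a : ℝ) (u v : ι → ℝ) : fdot u (a • v) = a * fdot u v := by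
  simp only [fdot_eq_dotProduct, dotProduct_smul, smul_eq_mul]

lemma fdot_self_pos {v : ι → ℝ} (hv : v ≠ 0) : 0 < fdot v v := by
  rw [fdot_eq_dotProduct]
  exact (dotProduct_self_star_nonneg v).lt_of_ne' (dotProduct_self_eq_zero.not.mpr hv)

lemma fdot_inv_sqrt_smul_self {v : ι → ℝ} (hv : v ≠ 0) :
    fdot ((√(fdot v v))⁻¹ • v) ((√(fdot v v))⁻¹ • v) = 1 := by
  have hpos := fdot_self_pos hv
  rw [fdot_smul_left, fdot_smul_right, ← mul_assoc, ← mul_inv, Real.mul_self_sqrt hpos.le,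
    inv_mul_cancel₀ hpos.ne']

end Fdot

section TensProd

variable {d : ℕ} {n : Fin d → ℕ}

lemma tensProd_smul (c : Fin d → ℝ) (v : (k : Fin d) → Fin (n k) → ℝ) :
    tensProd (fun k => c k • v k) = (∏ k, c k) • tensProd v := by
  funext i
  simp only [tensProd, Pi.smul_apply, smul_eq_mul, prod_mul_distrib]

lemma ne_zero_of_tensProd_ne_zero {v : (k : Fin d) → Fin (n k) → ℝ} (hv : tensProd v ≠ 0)
    (k : Fin d) : v k ≠ 0 := by
  rintro hk
  exact hv (funext fun i => prod_eq_zero (mem_univ k) (by simp [hk]))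

lemma fdot_tensProd (v w : (k : Fin d) → Fin (n k) → ℝ) :
    fdot (tensProd v) (tensProd w) = ∏ k, fdot (v k) (w k) := by
  simp only [fdot, tensProd, ← prod_mul_distrib]
  exact (Fintype.prod_sum fun k j => v k j * w k j).symm

lemma contr_smul (a : ℝ) (T : ((k : Fin d) → Fin (n k)) → ℝ)
    (w : (k : Fin d) → Fin (n k) → ℝ) (k : Fin d) (m : Fin (n k)) :
    contr (a • T) w k m = a * contr T w k m := by
  simp only [contr, Pi.smul_apply, smul_eq_mul, mul_sum, mul_assoc]

lemma contr_sum {α : Type*} (s : Finset α) (T : α → ((k : Fin d) → Fin (n k)) → ℝ)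
    (w : (k : Fin d) → Fin (n k) → ℝ) (k : Fin d) (m : Fin (n k)) :
    contr (∑ j ∈ s, T j) w k m = ∑ j ∈ s, contr (T j) w k m := by
  simp only [contr, Finset.sum_apply, sum_mul]
  exact sum_comm

lemma contr_tensProd (v w : (k : Fin d) → Fin (n k) → ℝ) (k : Fin d) (m : Fin (n k)) :
    contr (tensProd v) w k m = v k m * ∏ l ∈ univ.erase k, fdot (v l) (w l) := by
  -- The constraint `i k = m` becomes an indicator in the `k`-th factor, after which the sum
  -- over all multi-indices factorizes.
  set f : (l : Fin d) → Fin (n l) → ℝ :=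
    Function.update (fun l j => v l j * w l j) k (fun j => if j = m then v k j else 0)
  have hf_ne : ∀ l ∈ univ.erase k, ∀ j, f l j = v l j * w l j := fun l hl j => by
    simp [f, Function.update_of_ne (ne_of_mem_erase hl)]
  have hterm : ∀ i : (l : Fin d) → Fin (n l),
      (if i k = m then tensProd v i * ∏ l ∈ univ.erase k, w l (i l) else 0) =
        ∏ l, f l (i l) := by
    intro i
    rw [← mul_prod_erase univ (fun l => f l (i l)) (mem_univ k),
      prod_congr rfl fun l hl => hf_ne l hl (i l), prod_mul_distrib]
    simp only [f, Function.update_self, tensProd,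
      ← mul_prod_erase univ (fun l => v l (i l)) (mem_univ k)]
    split_ifs <;> ring
  rw [contr, sum_filter, sum_congr rfl fun i _ => hterm i, ← Fintype.prod_sum,
    ← mul_prod_erase univ (fun l => ∑ j, f l j) (mem_univ k)]
  congr 1
  · simp [f]
  · exact prod_congr rfl fun l hl => sum_congr rfl fun j _ => hf_ne l hl j

lemma contr_tensProd_eq_zero_of_two_orthogonal {v w : (k : Fin d) → Fin (n k) → ℝ}
    {k₁ k₂ : Fin d} (hk : k₁ ≠ k₂) (h₁ : fdot (v k₁) (w k₁) = 0)
    (h₂ : fdot (v k₂) (w k₂) = 0) (k : Fin d) (m : Fin (n k)) :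
    contr (tensProd v) w k m = 0 := by
  rw [contr_tensProd]
  obtain ⟨l, hl, h⟩ : ∃ l ∈ univ.erase k, fdot (v l) (w l) = 0 := by
    by_cases hk₁ : k₁ = k
    · exact ⟨k₂, mem_erase.mpr ⟨hk₁ ▸ hk.symm, mem_univ _⟩, h₂⟩
    · exact ⟨k₁, mem_erase.mpr ⟨hk₁, mem_univ _⟩, h₁⟩
  rw [prod_eq_zero hl h, mul_zero]

end TensProd

theorem stmt19_general (d : ℕ) (n : Fin d → ℕ)
    (r : ℕ) (x : Fin r → (k : Fin d) → Fin (n k) → ℝ)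
    (hx : ∀ i, tensProd (x i) ≠ 0)
    (horth : ∀ i j : Fin r, i ≠ j → ∃ k₁ k₂ : Fin d, k₁ ≠ k₂ ∧
      fdot (x i k₁) (x j k₁) = 0 ∧ fdot (x i k₂) (x j k₂) = 0)
    (T : ((k : Fin d) → Fin (n k)) → ℝ)
    (hT : T = ∑ i, tensProd (x i)) :
    ∀ i : Fin r, ∃ (u : (k : Fin d) → Fin (n k) → ℝ) (lam : ℝ),
      (∀ k, fdot (u k) (u k) = 1) ∧
      |lam| = Real.sqrt (fdot (tensProd (x i)) (tensProd (x i))) ∧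
      tensProd (x i) = lam • tensProd u ∧
      (∀ (k : Fin d) (m : Fin (n k)), contr T u k m = lam * u k m) := by
  intro i
  have hxi := ne_zero_of_tensProd_ne_zero (hx i)
  set c : Fin d → ℝ := fun k => √(fdot (x i k) (x i k))
  have hc : ∀ k, c k ≠ 0 := fun k => (Real.sqrt_pos.mpr (fdot_self_pos (hxi k))).ne'
  set u : (k : Fin d) → Fin (n k) → ℝ := fun k => (c k)⁻¹ • x i k
  have hxu : tensProd (x i) = (∏ k, c k) • tensProd u := by
    rw [← tensProd_smul]
    congr 1
    funext k
    simp only [u, smul_inv_smul₀ (hc k)]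
  have hunit : ∀ k, fdot (u k) (u k) = 1 := fun k => fdot_inv_sqrt_smul_self (hxi k)
  refine ⟨u, ∏ k, c k, hunit, ?_, hxu, fun k m => ?_⟩
  · rw [fdot_tensProd, ← Real.sqrt_sq_eq_abs, ← prod_pow]
    exact congrArg _ (prod_congr rfl fun k _ => Real.sq_sqrt (fdot_self_pos (hxi k)).le)
  · rw [hT, contr_sum, sum_eq_single i, hxu, contr_smul, contr_tensProd, prod_congr rfl
      fun l _ => hunit l, prod_const_one, mul_one]
    · intro j _ hji
      obtain ⟨k₁, k₂, hk, h₁, h₂⟩ := horth j i hji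
      exact contr_tensProd_eq_zero_of_two_orthogonal hk
        (by rw [fdot_smul_right, h₁, mul_zero]) (by rw [fdot_smul_right, h₂, mul_zero]) k m
    · exact fun h => absurd (mem_univ i) h

/-- Each summand `x⁽ⁱ⁾` of a two-orthogonal decomposition of `T`, after
normalizing its factors, is a singular vector tuple of `T` whose singular value
is `±‖x⁽ⁱ⁾‖`. -/
theorem stmt19 (d : ℕ) (hd : 2 ≤ d) (n : Fin d → ℕ) (hn : ∀ k, 2 ≤ n k)
    (r : ℕ) (x : Fin r → (k : Fin d) → Fin (n k) → ℝ)
    (hx : ∀ i, tensProd (x i) ≠ 0)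
    (horth : ∀ i j : Fin r, i ≠ j → ∃ k₁ k₂ : Fin d, k₁ ≠ k₂ ∧
      fdot (x i k₁) (x j k₁) = 0 ∧ fdot (x i k₂) (x j k₂) = 0)
    (T : ((k : Fin d) → Fin (n k)) → ℝ)
    (hT : T = ∑ i, tensProd (x i)) :
    ∀ i : Fin r, ∃ (u : (k : Fin d) → Fin (n k) → ℝ) (lam : ℝ),
      (∀ k, fdot (u k) (u k) = 1) ∧
      |lam| = Real.sqrt (fdot (tensProd (x i)) (tensProd (x i))) ∧
      tensProd (x i) = lam • tensProd u ∧
      (∀ (k : Fin d) (m : Fin (n k)), contr T u k m = lam * u k m) :=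
  stmt19_general d n r x hx horth T hT
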